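/- For any s ∈ S, the without-replacement sampling probabilities satisfy p(S) + p(S\{s}) · (1 - ∑_{s'∈S} p(s'))/(1 - ∑_{s'∈S\{s}} p(s')) = p^{D\{s}}(S\{s}). -/

import Mathlib

open Finset MeasureTheory

variable {α : Type*}

/-- Probability of drawing the ordered sample `B` sequentially without replacement
from (unnormalized) weights `p`, when `t` is the total remaining probability mass. -/
noncomputable def ordProb (p : α → ℝ) : ℝ → List α → ℝ
  | _, [] => 1
  | t, b :: L => (p b / t) * ordProb p (t - p b) L

/-- Probability of drawing the unordered sample `S` without replacement:
sum of `ordProb` over all orderings of `S`. -/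
noncomputable def setProb (p : α → ℝ) (t : ℝ) (S : Finset α) : ℝ :=
  (S.toList.permutations.map (ordProb p t)).sum

/-!
Condition on the first draw `b`. Removing `b` from the sample and the mass `p b` from the
total `t` leaves the ratio `(t - m(S)) / (t - m(S \ {s}))` unchanged (`m` the mass of a set),
so the identity for `S` follows by strong induction from the identities for the `S \ {b}`,
together with `∑ b, p b / t * setProb p (t' - p b) (S \ {b}) = t' / t * setProb p t' S`.
-/

theorem Finset.toList_erase_perm [DecidableEq α] (S : Finset α) (a : α) :
    (S.erase a).toList.Perm (S.toList.erase a) := by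
  rw [← Multiset.coe_eq_coe, ← Multiset.coe_erase, Finset.coe_toList, Finset.coe_toList,
    Finset.erase_val]

theorem Finset.cons_mem_permutations_toList [DecidableEq α] {S : Finset α} {a : α}
    {L : List α} :
    a :: L ∈ S.toList.permutations ↔ a ∈ S ∧ L ∈ (S.erase a).toList.permutations := by
  simp only [List.mem_permutations, List.cons_perm_iff_perm_erase, Finset.mem_toList,
    List.Perm.congr_right (S.toList_erase_perm a)]

theorem Finset.permutations_toList_toFinset [DecidableEq α] {S : Finset α} (hS : S.Nonempty) :
    S.toList.permutations.toFinset =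
      S.biUnion fun a => (S.erase a).toList.permutations.toFinset.image (a :: ·) := by
  ext (_ | ⟨a, L⟩)
  · simp [List.mem_permutations, hS.ne_empty]
  · rw [List.mem_toFinset, Finset.cons_mem_permutations_toList]
    simp

theorem setProb_eq_sum_toFinset [DecidableEq α] (p : α → ℝ) (t : ℝ) (S : Finset α) :
    setProb p t S = ∑ L ∈ S.toList.permutations.toFinset, ordProb p t L := by
  rw [setProb, List.sum_toFinset _ (List.nodup_permutations _ S.nodup_toList)]

@[simp]
theorem setProb_empty (p : α → ℝ) (t : ℝ) : setProb p t ∅ = 1 := by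
  simp [setProb, ordProb]

theorem setProb_eq_sum_erase [DecidableEq α] (p : α → ℝ) (t : ℝ) {S : Finset α}
    (hS : S.Nonempty) :
    setProb p t S = ∑ a ∈ S, p a / t * setProb p (t - p a) (S.erase a) := by
  rw [setProb_eq_sum_toFinset, Finset.permutations_toList_toFinset hS, sum_biUnion]
  · refine sum_congr rfl fun a _ => ?_
    rw [sum_image fun _ _ _ _ h => (List.cons_eq_cons.mp h).2, setProb_eq_sum_toFinset, mul_sum]
    rfl
  · intro a _ b _ hab
    simp only [Function.onFun, disjoint_left, mem_image]
    rintro _ ⟨L, _, rfl⟩ ⟨M, _, h⟩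
    exact hab (List.cons_eq_cons.mp h).1.symm

@[simp]
theorem setProb_singleton (p : α → ℝ) (t : ℝ) (a : α) : setProb p t {a} = p a / t := by
  classical
  simp [setProb_eq_sum_erase p t (singleton_nonempty a)]

theorem sum_div_mul_setProb_erase [DecidableEq α] (p : α → ℝ) (t : ℝ) {t' : ℝ} (ht' : t' ≠ 0)
    {S : Finset α} (hS : S.Nonempty) :
    ∑ a ∈ S, p a / t * setProb p (t' - p a) (S.erase a) = t' / t * setProb p t' S := by
  rw [setProb_eq_sum_erase p t' hS, mul_sum]
  refine sum_congr rfl fun a _ => ?_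
  field_simp

theorem setProb_insert [DecidableEq α] {p : α → ℝ} {s : α} {T : Finset α} {t : ℝ} (hsT : s ∉ T)
    (hp : ∀ x ∈ insert s T, 0 ≤ p x) (ht : p s + ∑ x ∈ T, p x < t) :
    setProb p t (insert s T) =
      setProb p (t - p s) T - (t - p s - ∑ x ∈ T, p x) / (t - ∑ x ∈ T, p x) * setProb p t T := by
  induction T using Finset.strongInduction generalizing t with
  | _ T ih =>
  have hmT : 0 ≤ ∑ x ∈ T, p x := sum_nonneg fun x hx => hp x (mem_insert_of_mem hx)
  have hps : 0 ≤ p s := hp s (mem_insert_self s T)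
  have ht0 : 0 < t := by linarith
  have hts : 0 < t - p s := by linarith
  rcases T.eq_empty_or_nonempty with rfl | hT
  · simp only [insert_empty, setProb_singleton, setProb_empty, sum_empty, sub_zero, mul_one]
    field_simp
    ring
  set c := (t - p s - ∑ x ∈ T, p x) / (t - ∑ x ∈ T, p x)
  have hstep : ∀ b ∈ T, setProb p (t - p b) (insert s (T.erase b)) =
      setProb p (t - p s - p b) (T.erase b) - c * setProb p (t - p b) (T.erase b) := by
    intro b hb
    rw [ih (T.erase b) (erase_ssubset hb) (fun h => hsT (mem_of_mem_erase h))
      (fun x hx => hp x (insert_subset_insert s (erase_subset b T) hx))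
      (by rw [sum_erase_eq_sub hb]; linarith),
      sum_erase_eq_sub hb, sub_right_comm t (p b) (p s)]
    congr 3 <;> ring
  calc setProb p t (insert s T)
      = p s / t * setProb p (t - p s) T +
          ∑ b ∈ T, p b / t * setProb p (t - p b) (insert s (T.erase b)) := by
        rw [setProb_eq_sum_erase p t (insert_nonempty s T), sum_insert hsT, erase_insert hsT]
        congr 1
        refine sum_congr rfl fun b hb => ?_
        rw [erase_insert_of_ne (ne_of_mem_of_not_mem hb hsT).symm]
    _ = p s / t * setProb p (t - p s) T +
          (∑ b ∈ T, p b / t * setProb p (t - p s - p b) (T.erase b) -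
            c * ∑ b ∈ T, p b / t * setProb p (t - p b) (T.erase b)) := by
        rw [mul_sum, ← sum_sub_distrib]
        congr 1
        exact sum_congr rfl fun b hb => by rw [hstep b hb]; ring
    _ = p s / t * setProb p (t - p s) T + ((t - p s) / t * setProb p (t - p s) T -
          c * setProb p t T) := by
        rw [sum_div_mul_setProb_erase p t hts.ne' hT, ← setProb_eq_sum_erase p t hT]
    _ = setProb p (t - p s) T - c * setProb p t T := by
        field_simp
        ring

theorem setProb_leave_one_out_relation_general [DecidableEq α] (D S : Finset α) (hS : S ⊆ D)
    (s : α) (hs : s ∈ S) (p : α → ℝ) (hp : ∀ x ∈ D, 0 < p x)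
    (hmass : ∑ s' ∈ S, p s' < 1) :
    setProb p 1 S + setProb p 1 (S.erase s) *
        ((1 - ∑ s' ∈ S, p s') / (1 - ∑ s' ∈ S.erase s, p s'))
      = setProb p (1 - p s) (S.erase s) := by
  have hsum : ∑ s' ∈ S, p s' = p s + ∑ s' ∈ S.erase s, p s' := (add_sum_erase S p hs).symm
  have hrec := setProb_insert (p := p) (t := 1) (notMem_erase s S)
    (by rw [insert_erase hs]; exact fun x hx => (hp x (hS hx)).le) (by rwa [← hsum])
  rw [insert_erase hs] at hrec
  rw [hrec, hsum]
  ring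

theorem setProb_leave_one_out_relation [DecidableEq α] (D S : Finset α) (hS : S ⊆ D)
    (s : α) (hs : s ∈ S) (p : α → ℝ) (hp : ∀ x ∈ D, 0 < p x)
    (hsum : ∑ x ∈ D, p x = 1) (hmass : ∑ s' ∈ S, p s' < 1) :
    setProb p 1 S + setProb p 1 (S.erase s) *
        ((1 - ∑ s' ∈ S, p s') / (1 - ∑ s' ∈ S.erase s, p s'))
      = setProb p (1 - p s) (S.erase s) :=
  setProb_leave_one_out_relation_general D S hS s hs p hp hmass
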